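/- arXiv:1502.02242 — 9 statements merged into one kernel-verified Lean document; each statement's English description precedes it below -/
import Mathlib

section
/- For every context-free grammar G = (N, Σ, P) in Chomsky Normal Form, the sum over all nonterminals a with L(G; a) ≠ ∅ of the minimum length of a string in L(G; a) is at most 2^|N| − 1. -/
/-- Derivation relation of a context-free grammar in Chomsky Normal Form:
`Pb a b c` means the binary rule `a → b c` is present, and `Pt a s` means the
terminal rule `a → s` is present. `CNFDerives Pb Pt a w` means the terminal
string `w ∈ Σ*` is derivable from the nonterminal `a`, i.e. `w ∈ L(G; a)`. -/
inductive CNFDerives {N σ : Type*} (Pb : N → N → N → Prop) (Pt : N → σ → Prop) :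
    N → List σ → Prop
  | term {a : N} {s : σ} : Pt a s → CNFDerives Pb Pt a [s]
  | bin {a b c : N} {w₁ w₂ : List σ} : Pb a b c → CNFDerives Pb Pt b w₁ →
      CNFDerives Pb Pt c w₂ → CNFDerives Pb Pt a (w₁ ++ w₂)

namespace Stmt2Aux

open scoped Classical

variable {N σ : Type*} {Pb : N → N → N → Prop} {Pt : N → σ → Prop}

lemma len_pos {a : N} {w : List σ} (h : CNFDerives Pb Pt a w) : 1 ≤ w.length := by
  induction h with
  | term _ => simp
  | bin _ _ _ ih₁ ih₂ =>
    rw [List.length_append]; omega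

/-- minimal length of a derivable word -/
noncomputable def mlen (Pb : N → N → N → Prop) (Pt : N → σ → Prop) (a : N) : ℕ :=
  sInf {n | ∃ w, CNFDerives Pb Pt a w ∧ w.length = n}

lemma mlen_le {a : N} {w : List σ} (h : CNFDerives Pb Pt a w) :
    mlen Pb Pt a ≤ w.length := Nat.sInf_le ⟨w, h, rfl⟩

lemma step1 (a : N) :
    mlen Pb Pt a ≤ 1 ∨ ∃ b c, mlen Pb Pt b < mlen Pb Pt a ∧ mlen Pb Pt c < mlen Pb Pt a ∧
      mlen Pb Pt a ≤ mlen Pb Pt b + mlen Pb Pt c := by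
  by_cases hne : {n | ∃ w, CNFDerives Pb Pt a w ∧ w.length = n}.Nonempty
  · obtain ⟨w, hw, hlen⟩ := Nat.sInf_mem hne
    have hlen' : w.length = mlen Pb Pt a := hlen
    cases hw with
    | term h => left; simp at hlen'; omega
    | @bin _ b c w₁ w₂ hrule hb hc =>
      right
      refine ⟨b, c, ?_, ?_, ?_⟩
      · have h1 := mlen_le hb
        have h2 := len_pos hc
        rw [List.length_append] at hlen'
        omega
      · have h1 := mlen_le hc
        have h2 := len_pos hb
        rw [List.length_append] at hlen'
        omega
      · have hbne : {n | ∃ w, CNFDerives Pb Pt b w ∧ w.length = n}.Nonempty :=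
          ⟨w₁.length, w₁, hb, rfl⟩
        have hcne : {n | ∃ w, CNFDerives Pb Pt c w ∧ w.length = n}.Nonempty :=
          ⟨w₂.length, w₂, hc, rfl⟩
        obtain ⟨u, hu, hul⟩ := Nat.sInf_mem hbne
        obtain ⟨v, hv, hvl⟩ := Nat.sInf_mem hcne
        have := mlen_le (CNFDerives.bin hrule hu hv)
        rw [List.length_append] at this
        have hu' : u.length = mlen Pb Pt b := hul
        have hv' : v.length = mlen Pb Pt c := hvl
        omega
  · left
    have : {n | ∃ w, CNFDerives Pb Pt a w ∧ w.length = n} = ∅ :=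
      Set.not_nonempty_iff_eq_empty.mp hne
    simp [mlen, this]

lemma step2 [Fintype N] :
    ∀ (k : ℕ) (a : N), mlen Pb Pt a ≤ k →
      mlen Pb Pt a ≤
        2 ^ (Finset.univ.filter (fun x => mlen Pb Pt x < mlen Pb Pt a)).card := by
  intro k
  induction k with
  | zero => intro a ha; exact ha.trans (Nat.zero_le _)
  | succ k ih =>
    intro a ha
    rcases step1 (Pb := Pb) (Pt := Pt) a with h1 | ⟨b, c, hb, hc, habc⟩
    · calc mlen Pb Pt a ≤ 1 := h1
        _ ≤ _ := Nat.one_le_two_pow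
    · -- let d be the one of b, c with larger mlen
      obtain ⟨d, hdmax, hd⟩ : ∃ d, mlen Pb Pt b ≤ mlen Pb Pt d ∧ mlen Pb Pt c ≤ mlen Pb Pt d
          ∧ mlen Pb Pt d < mlen Pb Pt a := by
        rcases le_total (mlen Pb Pt b) (mlen Pb Pt c) with h | h
        · exact ⟨c, h, le_refl _, hc⟩
        · exact ⟨b, le_refl _, h, hb⟩
      obtain ⟨hd, hda⟩ := hd
      have hdk : mlen Pb Pt d ≤ k := by omega
      have ihd := ih d hdk
      have hsub : (Finset.univ.filter (fun x => mlen Pb Pt x < mlen Pb Pt d)) ⊂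
          (Finset.univ.filter (fun x => mlen Pb Pt x < mlen Pb Pt a)) := by
        rw [Finset.ssubset_iff_of_subset]
        · exact ⟨d, by simp [hda], by simp⟩
        · intro x hx
          simp only [Finset.mem_filter, Finset.mem_univ, true_and] at hx ⊢
          omega
      have hcard := Finset.card_lt_card hsub
      calc mlen Pb Pt a ≤ mlen Pb Pt b + mlen Pb Pt c := habc
        _ ≤ 2 * mlen Pb Pt d := by omega
        _ ≤ 2 * 2 ^ (Finset.univ.filter (fun x => mlen Pb Pt x < mlen Pb Pt d)).card := by
            omega
        _ = 2 ^ ((Finset.univ.filter (fun x => mlen Pb Pt x < mlen Pb Pt d)).card + 1) := by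
            ring
        _ ≤ 2 ^ (Finset.univ.filter (fun x => mlen Pb Pt x < mlen Pb Pt a)).card := by
            apply Nat.pow_le_pow_right (by norm_num)
            omega

lemma step3 (m : N → ℕ) :
    ∀ (s : Finset N), ∑ a ∈ s, 2 ^ (s.filter (fun x => m x < m a)).card ≤ 2 ^ s.card - 1 := by
  intro s
  induction s using Finset.strongInduction with
  | _ s ih =>
    rcases s.eq_empty_or_nonempty with rfl | hs
    · simp
    · obtain ⟨a₀, ha₀s, ha₀max⟩ := s.exists_max_image m hs
      set t := s.erase a₀ with ht
      have htsub : t ⊂ s := Finset.erase_ssubset ha₀s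
      have hsum : ∑ a ∈ s, 2 ^ (s.filter (fun x => m x < m a)).card =
          2 ^ (s.filter (fun x => m x < m a₀)).card +
          ∑ a ∈ t, 2 ^ (s.filter (fun x => m x < m a)).card :=
        (Finset.add_sum_erase s _ ha₀s).symm
      have hrest : ∀ a ∈ t, (s.filter (fun x => m x < m a)).card =
          (t.filter (fun x => m x < m a)).card := by
        intro a hat
        congr 1
        rw [ht, Finset.filter_erase, Finset.erase_eq_of_notMem]
        simp only [Finset.mem_filter, not_and]
        intro _
        have := ha₀max a (Finset.mem_of_mem_erase hat)
        omega
      have hrest' : ∑ a ∈ t, 2 ^ (s.filter (fun x => m x < m a)).card ≤ 2 ^ t.card - 1 := by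
        calc ∑ a ∈ t, 2 ^ (s.filter (fun x => m x < m a)).card
            = ∑ a ∈ t, 2 ^ (t.filter (fun x => m x < m a)).card :=
              Finset.sum_congr rfl (fun a ha => by rw [hrest a ha])
          _ ≤ 2 ^ t.card - 1 := ih t htsub
      have hterm : (s.filter (fun x => m x < m a₀)).card ≤ t.card := by
        apply Finset.card_le_card
        intro x hx
        simp only [Finset.mem_filter] at hx
        refine Finset.mem_erase.mpr ⟨?_, hx.1⟩
        rintro rfl
        exact absurd hx.2 (lt_irrefl _)
      have hpow : 2 ^ (s.filter (fun x => m x < m a₀)).card ≤ 2 ^ t.card :=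
        Nat.pow_le_pow_right (by norm_num) hterm
      have hcard : t.card + 1 = s.card := Finset.card_erase_add_one ha₀s
      have hpos : 1 ≤ 2 ^ t.card := Nat.one_le_two_pow
      have h2 : 2 ^ s.card = 2 * 2 ^ t.card := by
        rw [← hcard]; ring
      omega

end Stmt2Aux

/-- The sum, over all nonterminals `a` with `L(G; a) ≠ ∅`, of the minimum
length of a string in `L(G; a)`, is at most `2^|N| - 1`.  (For a nonterminal
with empty language the set of lengths is empty and `sInf ∅ = 0`, so such
nonterminals contribute nothing to the sum.) -/
theorem stmt2 {N σ : Type*} [Fintype N] (Pb : N → N → N → Prop) (Pt : N → σ → Prop) :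
    ∑ a : N, sInf {n | ∃ w, CNFDerives Pb Pt a w ∧ w.length = n} ≤
      2 ^ Fintype.card N - 1 := by
  classical
  have h1 : ∑ a : N, sInf {n | ∃ w, CNFDerives Pb Pt a w ∧ w.length = n} =
      ∑ a : N, Stmt2Aux.mlen Pb Pt a := rfl
  rw [h1]
  calc ∑ a : N, Stmt2Aux.mlen Pb Pt a
      ≤ ∑ a : N, 2 ^ (Finset.univ.filter
          (fun x => Stmt2Aux.mlen Pb Pt x < Stmt2Aux.mlen Pb Pt a)).card :=
        Finset.sum_le_sum (fun a _ => Stmt2Aux.step2 (Stmt2Aux.mlen Pb Pt a) a le_rfl)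
    _ ≤ 2 ^ (Finset.univ : Finset N).card - 1 := Stmt2Aux.step3 (Stmt2Aux.mlen Pb Pt) _
    _ = 2 ^ Fintype.card N - 1 := by rw [Finset.card_univ]
end

section
/- Let G = (N, Σ, P) be a context-free grammar in Chomsky Normal Form and a ∈ N a nonterminal with L(G; a) nonempty. Then there exists a subset P' ⊆ P that is deterministic non-recursive and such that the unique string derived from a using P' has length equal to the minimum length of a string in L(G; a). -/
/-- One-step "occurs in a derived sentential form" relation on nonterminals:
`NTStep Pb a b` holds when some binary rule `a → b c` or `a → c b` is in `Pb`. -/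
inductive NTStep {N : Type*} (Pb : N → N → N → Prop) : N → N → Prop
  | left {a b c : N} : Pb a b c → NTStep Pb a b
  | right {a b c : N} : Pb a b c → NTStep Pb a c

/-- `a` is a head nonterminal of the rule set `(Pb, Pt)`. -/
def IsHead {N σ : Type*} (Pb : N → N → N → Prop) (Pt : N → σ → Prop) (a : N) : Prop :=
  (∃ b c, Pb a b c) ∨ (∃ s, Pt a s)

/-- The rule set `(Pb, Pt)` is deterministic non-recursive: no head nonterminal
is derivable from itself in one or more rewrite steps, every head nonterminal
has exactly one rule, and every head nonterminal derives some terminal string. -/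
def DetNonRec {N σ : Type*} (Pb : N → N → N → Prop) (Pt : N → σ → Prop) : Prop :=
  (∀ a, IsHead Pb Pt a → ¬ Relation.TransGen (NTStep Pb) a a) ∧
  (∀ a, IsHead Pb Pt a →
    (∀ b c b' c', Pb a b c → Pb a b' c' → b = b' ∧ c = c') ∧
    (∀ s s', Pt a s → Pt a s' → s = s') ∧
    ¬ ((∃ b c, Pb a b c) ∧ (∃ s, Pt a s))) ∧
  (∀ a, IsHead Pb Pt a → ∃ w, CNFDerives Pb Pt a w)

/-!
For every productive nonterminal `x` let `m x` be the least length of a string derivable from `x`,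
and keep a single rule of `x` that attains it: a terminal rule if `m x = 1`, otherwise a binary
rule `x → b c` with `m b + m c = m x`, which exists because a shortest derivation from `x` splits
into derivations from `b` and `c` that cannot be shortened. Every string has positive length, so
`m` strictly decreases along the kept binary rules; this rules out recursion, and by induction on
`m x` the kept rules derive from `x` a string of length exactly `m x`.
-/

section ShortestRules

variable {N σ : Type*} (Pb : N → N → N → Prop) (Pt : N → σ → Prop)

def Productive (x : N) : Prop := ∃ w, CNFDerives Pb Pt x w

noncomputable def minDerivLength (x : N) : ℕ :=
  sInf {n | ∃ w, CNFDerives Pb Pt x w ∧ w.length = n}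

/-- A rule of `x`, encoded as `.inl (b, c)` for `x → b c` and `.inr s` for `x → s`, that starts a
shortest derivation from `x`. -/
def IsShortestRule (x : N) : (N × N) ⊕ σ → Prop
  | .inl (b, c) => Pb x b c ∧ Productive Pb Pt b ∧ Productive Pb Pt c ∧
      minDerivLength Pb Pt b + minDerivLength Pb Pt c = minDerivLength Pb Pt x
  | .inr s => Pt x s ∧ minDerivLength Pb Pt x = 1

noncomputable def shortestRule (x : N) : (N × N) ⊕ σ :=
  @Classical.epsilon _ ⟨.inl (x, x)⟩ (IsShortestRule Pb Pt x)

def shortestPb (x b c : N) : Prop := Productive Pb Pt x ∧ shortestRule Pb Pt x = .inl (b, c)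

def shortestPt (x : N) (s : σ) : Prop := Productive Pb Pt x ∧ shortestRule Pb Pt x = .inr s

variable {Pb Pt}

theorem CNFDerives.length_pos {x : N} {w : List σ} (hw : CNFDerives Pb Pt x w) :
    0 < w.length := by
  induction hw with
  | term => simp
  | bin _ _ _ ih₁ _ => simp [ih₁]

theorem minDerivLength_le {x : N} {w : List σ} (hw : CNFDerives Pb Pt x w) :
    minDerivLength Pb Pt x ≤ w.length :=
  Nat.sInf_le ⟨w, hw, rfl⟩

theorem exists_length_eq_minDerivLength {x : N} (hx : Productive Pb Pt x) :
    ∃ w, CNFDerives Pb Pt x w ∧ w.length = minDerivLength Pb Pt x := by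
  obtain ⟨w, hw⟩ := hx
  exact Nat.sInf_mem (s := {n | ∃ w, CNFDerives Pb Pt x w ∧ w.length = n}) ⟨_, w, hw, rfl⟩

theorem minDerivLength_pos {x : N} (hx : Productive Pb Pt x) : 0 < minDerivLength Pb Pt x := by
  obtain ⟨w, hw, hlen⟩ := exists_length_eq_minDerivLength hx
  exact hlen ▸ hw.length_pos

theorem exists_isShortestRule {x : N} (hx : Productive Pb Pt x) :
    ∃ r, IsShortestRule Pb Pt x r := by
  obtain ⟨w, hw, hlen⟩ := exists_length_eq_minDerivLength hx
  cases hw with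
  | term hs => exact ⟨.inr _, hs, by simpa using hlen.symm⟩
  | @bin _ b c w₁ w₂ hbc h₁ h₂ =>
    refine ⟨.inl (b, c), hbc, ⟨_, h₁⟩, ⟨_, h₂⟩, le_antisymm ?_ ?_⟩
    · have hb := minDerivLength_le h₁
      have hc := minDerivLength_le h₂
      rw [← hlen, List.length_append]
      omega
    · obtain ⟨wb, hwb, hlb⟩ := exists_length_eq_minDerivLength ⟨_, h₁⟩
      obtain ⟨wc, hwc, hlc⟩ := exists_length_eq_minDerivLength ⟨_, h₂⟩
      have := minDerivLength_le (CNFDerives.bin hbc hwb hwc)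
      rwa [List.length_append, hlb, hlc] at this

theorem isShortestRule_shortestRule {x : N} (hx : Productive Pb Pt x) :
    IsShortestRule Pb Pt x (shortestRule Pb Pt x) :=
  Classical.epsilon_spec (exists_isShortestRule hx)

theorem shortestPb_le {x b c : N} (h : shortestPb Pb Pt x b c) : Pb x b c := by
  obtain ⟨hx, hr⟩ := h
  have := isShortestRule_shortestRule hx
  rw [hr] at this
  exact this.1

theorem shortestPt_le {x : N} {s : σ} (h : shortestPt Pb Pt x s) : Pt x s := by
  obtain ⟨hx, hr⟩ := h
  have := isShortestRule_shortestRule hx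
  rw [hr] at this
  exact this.1

theorem minDerivLength_lt_of_shortestPb {x b c : N} (h : shortestPb Pb Pt x b c) :
    minDerivLength Pb Pt b < minDerivLength Pb Pt x ∧
      minDerivLength Pb Pt c < minDerivLength Pb Pt x := by
  obtain ⟨hx, hr⟩ := h
  have := isShortestRule_shortestRule hx
  rw [hr] at this
  obtain ⟨-, hb, hc, hsum⟩ := this
  have := minDerivLength_pos hb
  have := minDerivLength_pos hc
  omega

theorem not_transGen_ntStep_shortestPb_self (x : N) :
    ¬ Relation.TransGen (NTStep (shortestPb Pb Pt)) x x := by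
  intro hx
  have hlt : Relation.TransGen (· > ·) (minDerivLength Pb Pt x) (minDerivLength Pb Pt x) :=
    hx.lift _ fun _ _ hstep => by
      cases hstep with
      | left h => exact (minDerivLength_lt_of_shortestPb h).1
      | right h => exact (minDerivLength_lt_of_shortestPb h).2
  rw [Relation.transGen_eq_self] at hlt
  exact lt_irrefl _ hlt

theorem exists_shortest_derives_length_eq {x : N} (hx : Productive Pb Pt x) :
    ∃ w, CNFDerives (shortestPb Pb Pt) (shortestPt Pb Pt) x w ∧
      w.length = minDerivLength Pb Pt x := by
  induction hm : minDerivLength Pb Pt x using Nat.strong_induction_on generalizing x with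
  | _ m ih =>
  have hrule := isShortestRule_shortestRule hx
  rcases hr : shortestRule Pb Pt x with ⟨b, c⟩ | s
  · rw [hr] at hrule
    obtain ⟨-, hb, hc, hsum⟩ := hrule
    obtain ⟨hbx, hcx⟩ := minDerivLength_lt_of_shortestPb ⟨hx, hr⟩
    obtain ⟨w₁, h₁, l₁⟩ := ih _ (hm ▸ hbx) hb rfl
    obtain ⟨w₂, h₂, l₂⟩ := ih _ (hm ▸ hcx) hc rfl
    exact ⟨w₁ ++ w₂, .bin ⟨hx, hr⟩ h₁ h₂, by rw [List.length_append, l₁, l₂, hsum, hm]⟩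
  · rw [hr] at hrule
    exact ⟨[s], .term ⟨hx, hr⟩, by rw [← hm, hrule.2, List.length_singleton]⟩

theorem productive_of_isHead_shortest {x : N}
    (hx : IsHead (shortestPb Pb Pt) (shortestPt Pb Pt) x) : Productive Pb Pt x := by
  rcases hx with ⟨b, c, hx, -⟩ | ⟨s, hx, -⟩ <;> exact hx

theorem isHead_shortest {x : N} (hx : Productive Pb Pt x) :
    IsHead (shortestPb Pb Pt) (shortestPt Pb Pt) x := by
  rcases hr : shortestRule Pb Pt x with ⟨b, c⟩ | s
  · exact .inl ⟨b, c, hx, hr⟩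
  · exact .inr ⟨s, hx, hr⟩

theorem detNonRec_shortest : DetNonRec (shortestPb Pb Pt) (shortestPt Pb Pt) := by
  refine ⟨fun x _ => not_transGen_ntStep_shortestPb_self x, fun x _ => ⟨?_, ?_, ?_⟩,
    fun x hx => ?_⟩
  · rintro b c b' c' ⟨-, hr⟩ ⟨-, hr'⟩
    simpa using hr.symm.trans hr'
  · rintro s s' ⟨-, hr⟩ ⟨-, hr'⟩
    simpa using hr.symm.trans hr'
  · rintro ⟨⟨b, c, -, hr⟩, ⟨s, -, hr'⟩⟩
    exact Sum.inl_ne_inr (hr.symm.trans hr')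
  · obtain ⟨w, hw, -⟩ := exists_shortest_derives_length_eq (productive_of_isHead_shortest hx)
    exact ⟨w, hw⟩

end ShortestRules

/-- For a CNF grammar `G = (N, Σ, P)` and a nonterminal `a` with `L(G; a) ≠ ∅`,
there is a deterministic non-recursive subset `P' ⊆ P` with `a` a head of `P'`
such that the unique string derived from `a` via `P'` has length equal to the
minimum length of a string in `L(G; a)`. -/
theorem stmt3 {N σ : Type*} (Pb : N → N → N → Prop) (Pt : N → σ → Prop) (a : N)
    (h : ∃ w, CNFDerives Pb Pt a w) :
    ∃ (Pb' : N → N → N → Prop) (Pt' : N → σ → Prop),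
      (∀ x y z, Pb' x y z → Pb x y z) ∧ (∀ x s, Pt' x s → Pt x s) ∧
      DetNonRec Pb' Pt' ∧ IsHead Pb' Pt' a ∧
      ∃ w, CNFDerives Pb' Pt' a w ∧
        w.length = sInf {n | ∃ w', CNFDerives Pb Pt a w' ∧ w'.length = n} :=
  ⟨shortestPb Pb Pt, shortestPt Pb Pt, fun _ _ _ => shortestPb_le, fun _ _ => shortestPt_le,
    detNonRec_shortest, isHead_shortest h, exists_shortest_derives_length_eq h⟩
end

section
/- Let G = (N, Σ, P) be a context-free grammar in Chomsky Normal Form. Then there exists a single deterministic non-recursive subset P' ⊆ P such that, simultaneously for every nonterminal a ∈ N with L(G; a) ≠ ∅, the unique string derived from a via P' has length equal to the minimum length of a string in L(G; a). -/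
section Aux
variable {N σ : Type*} (Pb : N → N → N → Prop) (Pt : N → σ → Prop)

def Good (a : N) : Prop := ∃ w, CNFDerives Pb Pt a w

noncomputable def mlen (a : N) : ℕ :=
  sInf {n | ∃ w', CNFDerives Pb Pt a w' ∧ w'.length = n}

variable {Pb Pt}

lemma derives_pos {a : N} {w : List σ} (h : CNFDerives Pb Pt a w) : 1 ≤ w.length := by
  induction h with
  | term _ => simp
  | bin _ _ _ ih1 ih2 => simp only [List.length_append]; omega

lemma mlen_mem {a : N} (h : Good Pb Pt a) :
    ∃ w, CNFDerives Pb Pt a w ∧ w.length = mlen Pb Pt a := by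
  have : mlen Pb Pt a ∈ {n | ∃ w', CNFDerives Pb Pt a w' ∧ w'.length = n} := by
    apply Nat.sInf_mem
    obtain ⟨w, hw⟩ := h
    exact ⟨w.length, w, hw, rfl⟩
  exact this

lemma mlen_le {a : N} {w : List σ} (h : CNFDerives Pb Pt a w) : mlen Pb Pt a ≤ w.length :=
  Nat.sInf_le ⟨w, h, rfl⟩

lemma mlen_pos {a : N} (h : Good Pb Pt a) : 1 ≤ mlen Pb Pt a := by
  obtain ⟨w, hw, hl⟩ := mlen_mem h
  have := derives_pos hw; omega

lemma key {a : N} (h : Good Pb Pt a) :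
    (mlen Pb Pt a = 1 ∧ ∃ s, Pt a s) ∨
    (mlen Pb Pt a ≠ 1 ∧ ∃ p : N × N, Pb a p.1 p.2 ∧ Good Pb Pt p.1 ∧ Good Pb Pt p.2 ∧
      mlen Pb Pt p.1 + mlen Pb Pt p.2 = mlen Pb Pt a) := by
  obtain ⟨w, hw, hl⟩ := mlen_mem h
  cases hw with
  | @term _ s hs =>
    left
    exact ⟨by simpa using hl.symm, s, hs⟩
  | @bin _ b c w₁ w₂ hbc h1 h2 =>
    right
    have gb : Good Pb Pt b := ⟨_, h1⟩
    have gc : Good Pb Pt c := ⟨_, h2⟩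
    obtain ⟨v1, hv1, hl1⟩ := mlen_mem gb
    obtain ⟨v2, hv2, hl2⟩ := mlen_mem gc
    have hle : mlen Pb Pt a ≤ mlen Pb Pt b + mlen Pb Pt c := by
      have := mlen_le (CNFDerives.bin hbc hv1 hv2)
      simpa [hl1, hl2] using this
    have hb := mlen_le h1
    have hc := mlen_le h2
    have hlen : w₁.length + w₂.length = mlen Pb Pt a := by simpa using hl
    have sum : mlen Pb Pt b + mlen Pb Pt c = mlen Pb Pt a := by omega
    have pb := mlen_pos gb
    have pc := mlen_pos gc
    exact ⟨by omega, (b, c), hbc, gb, gc, sum⟩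

variable (Pb Pt)

def PtM (a : N) (s : σ) : Prop :=
  Good Pb Pt a ∧ mlen Pb Pt a = 1 ∧ ∃ (h : ∃ t, Pt a t), s = h.choose

def PbM (a b c : N) : Prop :=
  Good Pb Pt a ∧ mlen Pb Pt a ≠ 1 ∧
  ∃ (h : ∃ p : N × N, Pb a p.1 p.2 ∧ Good Pb Pt p.1 ∧ Good Pb Pt p.2 ∧
      mlen Pb Pt p.1 + mlen Pb Pt p.2 = mlen Pb Pt a), (b, c) = h.choose

variable {Pb Pt}

lemma PtM_sub {a : N} {s : σ} (h : PtM Pb Pt a s) : Pt a s := by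
  obtain ⟨_, _, he, hs⟩ := h
  subst hs; exact he.choose_spec

lemma PbM_spec {a b c : N} (h : PbM Pb Pt a b c) :
    Pb a b c ∧ Good Pb Pt b ∧ Good Pb Pt c ∧ mlen Pb Pt b + mlen Pb Pt c = mlen Pb Pt a := by
  obtain ⟨_, _, he, hp⟩ := h
  have := he.choose_spec
  rw [← hp] at this
  exact this

lemma step_lt {a b : N} (h : NTStep (PbM Pb Pt) a b) :
    Good Pb Pt b ∧ mlen Pb Pt b < mlen Pb Pt a := by
  cases h with
  | left hp =>
    obtain ⟨_, gb, gc, sum⟩ := PbM_spec hp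
    have := mlen_pos gc
    exact ⟨gb, by omega⟩
  | right hp =>
    obtain ⟨_, gb, gc, sum⟩ := PbM_spec hp
    have := mlen_pos gb
    exact ⟨gc, by omega⟩

lemma trans_lt {a b : N} (h : Relation.TransGen (NTStep (PbM Pb Pt)) a b) :
    mlen Pb Pt b < mlen Pb Pt a := by
  induction h with
  | single h => exact (step_lt h).2
  | tail _ h ih => exact lt_trans (step_lt h).2 ih

lemma head_good {a : N} (h : IsHead (PbM Pb Pt) (PtM Pb Pt) a) : Good Pb Pt a := by
  rcases h with ⟨b, c, hp⟩ | ⟨s, hp⟩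
  · exact hp.1
  · exact hp.1

lemma good_head {a : N} (h : Good Pb Pt a) : IsHead (PbM Pb Pt) (PtM Pb Pt) a := by
  rcases key h with ⟨hm, hs⟩ | ⟨hm, hp⟩
  · exact Or.inr ⟨hs.choose, h, hm, hs, rfl⟩
  · exact Or.inl ⟨hp.choose.1, hp.choose.2, h, hm, hp, rfl⟩

lemma derive_min : ∀ (n : ℕ) (a : N), Good Pb Pt a → mlen Pb Pt a ≤ n →
    ∃ w, CNFDerives (PbM Pb Pt) (PtM Pb Pt) a w ∧ w.length = mlen Pb Pt a := by
  intro n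
  induction n with
  | zero => intro a ha hle; have := mlen_pos ha; omega
  | succ n ih =>
    intro a ha hle
    rcases good_head ha with ⟨b, c, hp⟩ | ⟨s, hp⟩
    · obtain ⟨_, gb, gc, sum⟩ := PbM_spec hp
      have pb := mlen_pos gb
      have pc := mlen_pos gc
      obtain ⟨w1, hw1, hl1⟩ := ih b gb (by omega)
      obtain ⟨w2, hw2, hl2⟩ := ih c gc (by omega)
      exact ⟨w1 ++ w2, CNFDerives.bin hp hw1 hw2, by simp [hl1, hl2, sum]⟩
    · exact ⟨[s], CNFDerives.term hp, by simp [hp.2.1]⟩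

end Aux

/-- For a CNF grammar `G = (N, Σ, P)` there is a single deterministic
non-recursive subset `P' ⊆ P` such that simultaneously for every nonterminal
`a` with `L(G; a) ≠ ∅`, `a` is a head of `P'` and the unique string derived
from `a` via `P'` has length equal to the minimum length of a string in
`L(G; a)` (a minimizing set of production rules). -/
theorem stmt4 {N σ : Type*} (Pb : N → N → N → Prop) (Pt : N → σ → Prop) :
    ∃ (Pb' : N → N → N → Prop) (Pt' : N → σ → Prop),
      (∀ x y z, Pb' x y z → Pb x y z) ∧ (∀ x s, Pt' x s → Pt x s) ∧
      DetNonRec Pb' Pt' ∧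
      ∀ a : N, (∃ w, CNFDerives Pb Pt a w) →
        IsHead Pb' Pt' a ∧
        ∃ w, CNFDerives Pb' Pt' a w ∧
          w.length = sInf {n | ∃ w', CNFDerives Pb Pt a w' ∧ w'.length = n} := by
  refine ⟨PbM Pb Pt, PtM Pb Pt, fun x y z h => (PbM_spec h).1, fun x s h => PtM_sub h,
    ⟨?_, ?_, ?_⟩, ?_⟩
  · intro a _ htg
    exact absurd (trans_lt htg) (lt_irrefl _)
  · intro a _
    refine ⟨?_, ?_, ?_⟩
    · rintro b c b' c' ⟨_, _, h, hp⟩ ⟨_, _, h', hp'⟩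
      exact Prod.ext_iff.mp (hp.trans hp'.symm)
    · rintro s s' ⟨_, _, h, hp⟩ ⟨_, _, h', hp'⟩
      exact hp.trans hp'.symm
    · rintro ⟨⟨b, c, _, hne, _⟩, ⟨s, _, heq, _⟩⟩
      exact hne heq
  · intro a ha
    obtain ⟨w, hw, -⟩ := derive_min (mlen Pb Pt a) a (head_good ha) le_rfl
    exact ⟨w, hw⟩
  · intro a ha
    refine ⟨good_head ha, ?_⟩
    obtain ⟨w, hw, hl⟩ := derive_min (mlen Pb Pt a) a ha le_rfl
    exact ⟨w, hw, hl⟩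
end

section
/- Let G = (N, Σ, P) be a context-free grammar in Chomsky Normal Form, H = (V, Σ, E) a finite edge-labeled directed graph, and G' = (N', Σ, P') the annotated grammar over (G, H). Then |N'| ≤ |N|·|V|² and |P'| ≤ |P|·|V|³ + min(|N|, |P|)·|E|. -/
/-- `GWalk E m w n` means there is a path from node `m` to node `n` in the
edge-labeled graph with edge relation `E` whose trace (label sequence) is `w`;
i.e. `w ∈ L(H; m, n)`. -/
inductive GWalk {V σ : Type*} (E : V → σ → V → Prop) : V → List σ → V → Prop
  | nil {m : V} : GWalk E m [] m
  | cons {m : V} {s : σ} {o : V} {w : List σ} {n : V} :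
      E m s o → GWalk E o w n → GWalk E m (s :: w) n

/-- Size bounds on the annotated grammar over `(G, H)`: the number of annotated
nonterminals `(a, m, n)` (those with `L(G; a) ∩ L(H; m, n) ≠ ∅`) is at most
`|N|·|V|²`, and the number of annotated production rules (binary ones of the
form `(a,m,n) → (b,m,o)(c,o,n)` with `a → b c ∈ P` and all three annotated
nonterminals present, plus terminal ones `(a,m,n) → s` with `a → s ∈ P` and
`(m,s,n) ∈ E`) is at most `|P|·|V|³ + min(|N|, |P|)·|E|`. -/
theorem stmt5 {N σ V : Type*} [Fintype N] [Fintype V] [DecidableEq N] [DecidableEq σ]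
    [DecidableEq V] (Pb : Finset (N × N × N)) (Pt : Finset (N × σ))
    (E : Finset (V × σ × V)) :
    Nat.card {x : N × V × V //
        ∃ w, CNFDerives (fun a b c => (a, b, c) ∈ Pb) (fun a s => (a, s) ∈ Pt) x.1 w ∧
          GWalk (fun m s n => (m, s, n) ∈ E) x.2.1 w x.2.2} ≤
      Fintype.card N * Fintype.card V ^ 2 ∧
    Nat.card {r : (N × V × V) × (N × V × V) × (N × V × V) //
        (r.1.1, r.2.1.1, r.2.2.1) ∈ Pb ∧
        r.2.1.2.1 = r.1.2.1 ∧ r.2.1.2.2 = r.2.2.2.1 ∧ r.2.2.2.2 = r.1.2.2 ∧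
        (∃ w, CNFDerives (fun a b c => (a, b, c) ∈ Pb) (fun a s => (a, s) ∈ Pt) r.1.1 w ∧
          GWalk (fun m s n => (m, s, n) ∈ E) r.1.2.1 w r.1.2.2) ∧
        (∃ w, CNFDerives (fun a b c => (a, b, c) ∈ Pb) (fun a s => (a, s) ∈ Pt) r.2.1.1 w ∧
          GWalk (fun m s n => (m, s, n) ∈ E) r.2.1.2.1 w r.2.1.2.2) ∧
        (∃ w, CNFDerives (fun a b c => (a, b, c) ∈ Pb) (fun a s => (a, s) ∈ Pt) r.2.2.1 w ∧
          GWalk (fun m s n => (m, s, n) ∈ E) r.2.2.2.1 w r.2.2.2.2)} +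
      Nat.card {r : (N × V × V) × σ //
        (r.1.1, r.2) ∈ Pt ∧ (r.1.2.1, r.2, r.1.2.2) ∈ E} ≤
      (Pb.card + Pt.card) * Fintype.card V ^ 3 +
        min (Fintype.card N) (Pb.card + Pt.card) * E.card := by

  constructor
  · calc Nat.card {x : N × V × V //
        ∃ w, CNFDerives (fun a b c => (a, b, c) ∈ Pb) (fun a s => (a, s) ∈ Pt) x.1 w ∧
          GWalk (fun m s n => (m, s, n) ∈ E) x.2.1 w x.2.2}
        ≤ Nat.card (N × V × V) := Nat.card_le_card_of_injective _ Subtype.val_injective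
      _ = Fintype.card N * Fintype.card V ^ 2 := by
          simp [Nat.card_eq_fintype_card, sq, mul_assoc]
  · have hbin : Nat.card {r : (N × V × V) × (N × V × V) × (N × V × V) //
        (r.1.1, r.2.1.1, r.2.2.1) ∈ Pb ∧
        r.2.1.2.1 = r.1.2.1 ∧ r.2.1.2.2 = r.2.2.2.1 ∧ r.2.2.2.2 = r.1.2.2 ∧
        (∃ w, CNFDerives (fun a b c => (a, b, c) ∈ Pb) (fun a s => (a, s) ∈ Pt) r.1.1 w ∧
          GWalk (fun m s n => (m, s, n) ∈ E) r.1.2.1 w r.1.2.2) ∧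
        (∃ w, CNFDerives (fun a b c => (a, b, c) ∈ Pb) (fun a s => (a, s) ∈ Pt) r.2.1.1 w ∧
          GWalk (fun m s n => (m, s, n) ∈ E) r.2.1.2.1 w r.2.1.2.2) ∧
        (∃ w, CNFDerives (fun a b c => (a, b, c) ∈ Pb) (fun a s => (a, s) ∈ Pt) r.2.2.1 w ∧
          GWalk (fun m s n => (m, s, n) ∈ E) r.2.2.2.1 w r.2.2.2.2)} ≤
        Pb.card * Fintype.card V ^ 3 := by
      have h := Nat.card_le_card_of_injective
        (α := {r : (N × V × V) × (N × V × V) × (N × V × V) //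
        (r.1.1, r.2.1.1, r.2.2.1) ∈ Pb ∧
        r.2.1.2.1 = r.1.2.1 ∧ r.2.1.2.2 = r.2.2.2.1 ∧ r.2.2.2.2 = r.1.2.2 ∧
        (∃ w, CNFDerives (fun a b c => (a, b, c) ∈ Pb) (fun a s => (a, s) ∈ Pt) r.1.1 w ∧
          GWalk (fun m s n => (m, s, n) ∈ E) r.1.2.1 w r.1.2.2) ∧
        (∃ w, CNFDerives (fun a b c => (a, b, c) ∈ Pb) (fun a s => (a, s) ∈ Pt) r.2.1.1 w ∧
          GWalk (fun m s n => (m, s, n) ∈ E) r.2.1.2.1 w r.2.1.2.2) ∧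
        (∃ w, CNFDerives (fun a b c => (a, b, c) ∈ Pb) (fun a s => (a, s) ∈ Pt) r.2.2.1 w ∧
          GWalk (fun m s n => (m, s, n) ∈ E) r.2.2.2.1 w r.2.2.2.2)})
        (β := {p // p ∈ Pb} × (V × V × V))
        (fun r => (⟨(r.1.1.1, r.1.2.1.1, r.1.2.2.1), r.2.1⟩,
          (r.1.1.2.1, r.1.2.1.2.2, r.1.1.2.2)))
        (by
          rintro ⟨⟨⟨a,m,n⟩,⟨b,m',o⟩,⟨c,o',n'⟩⟩, hp, h1, h2, h3, _⟩
            ⟨⟨⟨a2,m2,n2⟩,⟨b2,m2',o2⟩,⟨c2,o2',n2'⟩⟩, hp2, h12, h22, h32, _⟩ heq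
          simp only [Prod.mk.injEq, Subtype.mk.injEq] at heq ⊢
          simp only at h1 h2 h3 h12 h22 h32
          obtain ⟨⟨ha, hb, hc⟩, hm, ho, hn⟩ := heq
          subst ha hb hc hm ho hn h1 h2 h3 h12 h22 h32
          simp)
      refine h.trans (le_of_eq ?_)
      simp [Nat.card_eq_fintype_card, Fintype.card_coe, pow_succ, sq, mul_assoc]
    have hterm1 : Nat.card {r : (N × V × V) × σ //
        (r.1.1, r.2) ∈ Pt ∧ (r.1.2.1, r.2, r.1.2.2) ∈ E} ≤ Fintype.card N * E.card := by
      have h := Nat.card_le_card_of_injective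
        (α := {r : (N × V × V) × σ // (r.1.1, r.2) ∈ Pt ∧ (r.1.2.1, r.2, r.1.2.2) ∈ E})
        (β := N × {e // e ∈ E})
        (fun r => (r.1.1.1, ⟨(r.1.1.2.1, r.1.2, r.1.1.2.2), r.2.2⟩))
        (by
          rintro ⟨⟨⟨a,m,n⟩,s⟩, hp, he⟩ ⟨⟨⟨a2,m2,n2⟩,s2⟩, hp2, he2⟩ heq
          simp only [Prod.mk.injEq, Subtype.mk.injEq] at heq ⊢
          obtain ⟨ha, hm, hs, hn⟩ := heq
          exact ⟨⟨ha, hm, hn⟩, hs⟩)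
      refine h.trans (le_of_eq ?_)
      simp [Nat.card_eq_fintype_card, Fintype.card_coe]
    have hterm2 : Nat.card {r : (N × V × V) × σ //
        (r.1.1, r.2) ∈ Pt ∧ (r.1.2.1, r.2, r.1.2.2) ∈ E} ≤ Pt.card * E.card := by
      have h := Nat.card_le_card_of_injective
        (α := {r : (N × V × V) × σ // (r.1.1, r.2) ∈ Pt ∧ (r.1.2.1, r.2, r.1.2.2) ∈ E})
        (β := {p // p ∈ Pt} × {e // e ∈ E})
        (fun r => (⟨(r.1.1.1, r.1.2), r.2.1⟩, ⟨(r.1.1.2.1, r.1.2, r.1.1.2.2), r.2.2⟩))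
        (by
          rintro ⟨⟨⟨a,m,n⟩,s⟩, hp, he⟩ ⟨⟨⟨a2,m2,n2⟩,s2⟩, hp2, he2⟩ heq
          simp only [Prod.mk.injEq, Subtype.mk.injEq] at heq ⊢
          obtain ⟨⟨ha, hs⟩, hm, _, hn⟩ := heq
          exact ⟨⟨ha, hm, hn⟩, hs⟩)
      refine h.trans (le_of_eq ?_)
      simp [Nat.card_eq_fintype_card, Fintype.card_coe]
    have hPble : Pb.card * Fintype.card V ^ 3 ≤ (Pb.card + Pt.card) * Fintype.card V ^ 3 :=
      Nat.mul_le_mul_right _ (Nat.le_add_right _ _)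
    rcases le_total (Fintype.card N) (Pb.card + Pt.card) with h | h
    · rw [min_eq_left h]
      exact Nat.add_le_add (hbin.trans hPble) hterm1
    · rw [min_eq_right h]
      exact Nat.add_le_add (hbin.trans hPble)
        (hterm2.trans (Nat.mul_le_mul_right _ (Nat.le_add_left _ _)))
end

section
/- Let G = (N, Σ, P) be a context-free grammar in Chomsky Normal Form, H = (V, Σ, E) an edge-labeled graph, and let G' be the annotated grammar over (G, H). For every path π from node m to node n in H and every nonterminal a ∈ N: the trace of π belongs to L(G; a) if and only if the annotated nonterminal (a, m, n) is a nonterminal of G' and π can be derived from (a, m, n) in G'. -/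
/-- `IsPath E m p n`: `p` is (the edge list of) a path from `m` to `n` in the
graph with edge relation `E`. The trace of `p` is `p.map (fun e => e.2.1)`. -/
inductive IsPath {V σ : Type*} (E : V → σ → V → Prop) : V → List (V × σ × V) → V → Prop
  | nil {m : V} : IsPath E m [] m
  | cons {m : V} {s : σ} {o : V} {p : List (V × σ × V)} {n : V} :
      E m s o → IsPath E o p n → IsPath E m ((m, s, o) :: p) n

/-- `AnnDerives Pb Pt E a m n p`: the annotated nonterminal `(a, m, n)` of the
annotated grammar over `(G, H)` derives the path `p`, i.e. it derives the trace
of `p` such that each terminal symbol `s` of the trace is produced by an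
annotated terminal rule `(b, n_j, n_{j+1}) → s` matching consecutive nodes. -/
inductive AnnDerives {N σ V : Type*} (Pb : N → N → N → Prop) (Pt : N → σ → Prop)
    (E : V → σ → V → Prop) : N → V → V → List (V × σ × V) → Prop
  | term {a : N} {s : σ} {m n : V} : Pt a s → E m s n → AnnDerives Pb Pt E a m n [(m, s, n)]
  | bin {a b c : N} {m o n : V} {p₁ p₂ : List (V × σ × V)} : Pb a b c →
      AnnDerives Pb Pt E b m o p₁ → AnnDerives Pb Pt E c o n p₂ →
      AnnDerives Pb Pt E a m n (p₁ ++ p₂)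

lemma walk_of_isPath {V σ : Type*} {E : V → σ → V → Prop} {m : V} {p : List (V × σ × V)}
    {n : V} (h : IsPath E m p n) : GWalk E m (p.map fun e => e.2.1) n := by
  induction h with
  | nil => exact GWalk.nil
  | cons he _ ih => exact GWalk.cons he ih

lemma isPath_append_split {V σ : Type*} {E : V → σ → V → Prop} {p₁ p₂ : List (V × σ × V)} :
    ∀ {m n : V}, IsPath E m (p₁ ++ p₂) n → ∃ o, IsPath E m p₁ o ∧ IsPath E o p₂ n := by
  induction p₁ with
  | nil => exact fun h => ⟨_, IsPath.nil, h⟩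
  | cons e t ih =>
    intro m n h
    cases h with
    | cons he ht =>
      obtain ⟨o, h1, h2⟩ := ih ht
      exact ⟨o, IsPath.cons he h1, h2⟩

lemma ann_of_cnf {N σ V : Type*} {Pb : N → N → N → Prop} {Pt : N → σ → Prop}
    {E : V → σ → V → Prop} {a : N} {w : List σ} (h : CNFDerives Pb Pt a w) :
    ∀ {p : List (V × σ × V)} {m n : V}, IsPath E m p n →
      (p.map fun e => e.2.1) = w → AnnDerives Pb Pt E a m n p := by
  induction h with
  | @term a s hts =>
    intro p m n hp htr
    cases hp with
    | nil => simp at htr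
    | @cons m s' o p' n he hp' =>
      simp at htr
      obtain ⟨hs, hp0⟩ := htr
      subst hs
      subst hp0
      cases hp'
      exact AnnDerives.term hts he
  | @bin a b c w₁ w₂ hb h1 h2 ih1 ih2 =>
    intro p m n hp htr
    have hsplit : p = p.take w₁.length ++ p.drop w₁.length := (List.take_append_drop _ p).symm
    rw [hsplit] at hp
    obtain ⟨o, hq1, hq2⟩ := isPath_append_split hp
    have hlen : w₁.length ≤ (p.map fun e => e.2.1).length := by
      rw [htr]; simp
    have ht1 : ((p.take w₁.length).map fun e => e.2.1) = w₁ := by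
      simp [List.map_take, htr]
    have ht2 : ((p.drop w₁.length).map fun e => e.2.1) = w₂ := by
      simp [List.map_drop, htr]
    rw [hsplit]
    exact AnnDerives.bin hb (ih1 hq1 ht1) (ih2 hq2 ht2)

lemma cnf_of_ann {N σ V : Type*} {Pb : N → N → N → Prop} {Pt : N → σ → Prop}
    {E : V → σ → V → Prop} {a : N} {m n : V} {p : List (V × σ × V)}
    (h : AnnDerives Pb Pt E a m n p) : CNFDerives Pb Pt a (p.map fun e => e.2.1) := by
  induction h with
  | term hts _ => exact CNFDerives.term hts
  | bin hb _ _ ih1 ih2 => rw [List.map_append]; exact CNFDerives.bin hb ih1 ih2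

/-- For every path `p` from `m` to `n` in `H` and nonterminal `a`: the trace of
`p` belongs to `L(G; a)` iff `(a, m, n)` is an annotated nonterminal of the
annotated grammar over `(G, H)` (i.e. `L(G; a) ∩ L(H; m, n) ≠ ∅`) and `p` can
be derived from `(a, m, n)` in the annotated grammar. -/
theorem stmt6 {N σ V : Type*} (Pb : N → N → N → Prop) (Pt : N → σ → Prop)
    (E : V → σ → V → Prop) (p : List (V × σ × V)) (m n : V) (a : N)
    (hp : IsPath E m p n) :
    CNFDerives Pb Pt a (p.map fun e => e.2.1) ↔
      (∃ w, CNFDerives Pb Pt a w ∧ GWalk E m w n) ∧ AnnDerives Pb Pt E a m n p := by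
  constructor
  · intro h
    exact ⟨⟨_, h, walk_of_isPath hp⟩, ann_of_cnf h hp rfl⟩
  · rintro ⟨-, hd⟩
    exact cnf_of_ann hd
end

section
/- Let G = (N, Σ, P) be a context-free grammar in Chomsky Normal Form with a ∈ N and H = (V, Σ, E) a graph with m, n ∈ V such that L = L(G; a) ∩ L(H; m, n) ≠ ∅. Then the minimum length of a string in L is at most 2^(|N|·|V|² − 1). -/
namespace Stmt8Aux

variable {N σ V : Type*} (Pb : N → N → N → Prop) (Pt : N → σ → Prop) (E : V → σ → V → Prop)

/-- One expansion step on sets of annotated nonterminals. -/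
def Step (S : Set (N × V × V)) : Set (N × V × V) :=
  S ∪ {p | (∃ s, Pt p.1 s ∧ E p.2.1 s p.2.2) ∨
        ∃ b c o, Pb p.1 b c ∧ (b, p.2.1, o) ∈ S ∧ (c, o, p.2.2) ∈ S}

/-- Iterates of `Step` starting from the empty set. -/
def Iter (h : ℕ) : Set (N × V × V) := (Step Pb Pt E)^[h] ∅

lemma iter_succ (h : ℕ) : Iter Pb Pt E (h + 1) = Step Pb Pt E (Iter Pb Pt E h) := by
  simp [Iter, Function.iterate_succ_apply']

lemma subset_step (S : Set (N × V × V)) : S ⊆ Step Pb Pt E S := Set.subset_union_left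

lemma iter_mono : Monotone (Iter Pb Pt E) := by
  refine monotone_nat_of_le_succ fun h => ?_
  rw [iter_succ]
  exact subset_step _ _ _ _

lemma iter_stab {j : ℕ} (hj : Iter Pb Pt E j = Iter Pb Pt E (j + 1)) (t : ℕ) :
    Iter Pb Pt E (j + t) = Iter Pb Pt E j := by
  induction t with
  | zero => rfl
  | succ t ih =>
    rw [show j + (t + 1) = (j + t) + 1 from rfl, iter_succ, ih, ← iter_succ, ← hj]

lemma gwalk_split {m n : V} {w₁ w₂ : List σ} (h : GWalk E m (w₁ ++ w₂) n) :
    ∃ o, GWalk E m w₁ o ∧ GWalk E o w₂ n := by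
  induction w₁ generalizing m with
  | nil => exact ⟨m, GWalk.nil, h⟩
  | cons s w ih =>
    cases h with
    | cons he hw =>
      obtain ⟨o, h1, h2⟩ := ih hw
      exact ⟨o, GWalk.cons he h1, h2⟩

lemma gwalk_append {m o n : V} {w₁ w₂ : List σ} (h1 : GWalk E m w₁ o)
    (h2 : GWalk E o w₂ n) : GWalk E m (w₁ ++ w₂) n := by
  induction h1 with
  | nil => simpa using h2
  | cons he _ ih => exact GWalk.cons he (ih h2)

/-- Soundness: membership in `Iter h` yields a word with `2 * length ≤ 2^h`. -/
lemma iter_sound {h : ℕ} {p : N × V × V} (hp : p ∈ Iter Pb Pt E h) :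
    ∃ w, CNFDerives Pb Pt p.1 w ∧ GWalk E p.2.1 w p.2.2 ∧ 2 * w.length ≤ 2 ^ h := by
  induction h generalizing p with
  | zero => exact absurd hp (by simp [Iter])
  | succ h ih =>
    rw [iter_succ] at hp
    rcases hp with hp | hp
    · obtain ⟨w, h1, h2, h3⟩ := ih hp
      exact ⟨w, h1, h2, h3.trans (Nat.pow_le_pow_right (by norm_num) (Nat.le_succ h))⟩
    · rcases hp with ⟨s, hs, he⟩ | ⟨b, c, o, hb, h1, h2⟩
      · refine ⟨[s], CNFDerives.term hs, GWalk.cons he GWalk.nil, ?_⟩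
        have : (2:ℕ)^1 ≤ 2^(h+1) := Nat.pow_le_pow_right (by norm_num) (by omega)
        simpa using this
      · obtain ⟨w₁, d1, g1, l1⟩ := ih h1
        obtain ⟨w₂, d2, g2, l2⟩ := ih h2
        refine ⟨w₁ ++ w₂, CNFDerives.bin hb d1 d2, gwalk_append E g1 g2, ?_⟩
        simp only [List.length_append]
        have : 2 ^ (h + 1) = 2 ^ h + 2 ^ h := by ring
        omega

/-- Completeness: any derivation matched by a walk lands in some `Iter h`. -/
lemma iter_complete {a : N} {w : List σ} (hd : CNFDerives Pb Pt a w) :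
    ∀ m n, GWalk E m w n → ∃ h, (a, m, n) ∈ Iter Pb Pt E h := by
  induction hd with
  | @term a s hs =>
    intro m n hw
    cases hw with
    | cons he hw' =>
      cases hw'
      refine ⟨1, ?_⟩
      rw [iter_succ]
      exact Or.inr (Or.inl ⟨s, hs, he⟩)
  | @bin a b c w₁ w₂ hb _ _ ih1 ih2 =>
    intro m n hw
    obtain ⟨o, g1, g2⟩ := gwalk_split E hw
    obtain ⟨h1, m1⟩ := ih1 m o g1
    obtain ⟨h2, m2⟩ := ih2 o n g2
    refine ⟨max h1 h2 + 1, ?_⟩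
    rw [iter_succ]
    exact Or.inr (Or.inr ⟨b, c, o, hb,
      iter_mono Pb Pt E (le_max_left h1 h2) m1,
      iter_mono Pb Pt E (le_max_right h1 h2) m2⟩)

end Stmt8Aux

/-- If `L = L(G; a) ∩ L(H; m, n) ≠ ∅` then the minimum length of a string in
`L` is at most `2 ^ (|N|·|V|² − 1)`. -/
theorem stmt8 {N σ V : Type*} [Fintype N] [Fintype V] (Pb : N → N → N → Prop)
    (Pt : N → σ → Prop) (E : V → σ → V → Prop) (a : N) (m n : V)
    (hne : ∃ w, CNFDerives Pb Pt a w ∧ GWalk E m w n) :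
    ∃ w, CNFDerives Pb Pt a w ∧ GWalk E m w n ∧
      w.length ≤ 2 ^ (Fintype.card N * Fintype.card V ^ 2 - 1) := by
  classical
  obtain ⟨w, hd, hw⟩ := hne
  set k := Fintype.card (N × V × V) with hk
  have hstab : ∃ j ≤ k, Stmt8Aux.Iter Pb Pt E j = Stmt8Aux.Iter Pb Pt E (j + 1) := by
    by_contra hcon
    push_neg at hcon
    have hcard : ∀ j ≤ k + 1, j ≤ (Stmt8Aux.Iter Pb Pt E j).ncard := by
      intro j hj
      induction j with
      | zero => simp
      | succ j ih =>
        have hjk : j ≤ k := by omega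
        have hne' := hcon j hjk
        have hss : Stmt8Aux.Iter Pb Pt E j ⊂ Stmt8Aux.Iter Pb Pt E (j + 1) :=
          lt_of_le_of_ne (Stmt8Aux.iter_mono Pb Pt E (Nat.le_succ j)) hne'
        have h3 := Set.ncard_lt_ncard hss (Set.toFinite _)
        have h4 := ih (by omega)
        omega
    have h1 := hcard (k + 1) le_rfl
    have h2 : (Stmt8Aux.Iter Pb Pt E (k + 1)).ncard ≤ k := by
      have h := Set.ncard_le_ncard (Set.subset_univ (Stmt8Aux.Iter Pb Pt E (k + 1)))
        Set.finite_univ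
      rwa [Set.ncard_univ, Nat.card_eq_fintype_card] at h
    omega
  obtain ⟨j, hjk, hj⟩ := hstab
  have hsub : ∀ h, Stmt8Aux.Iter Pb Pt E h ⊆ Stmt8Aux.Iter Pb Pt E k := by
    intro h
    calc Stmt8Aux.Iter Pb Pt E h ⊆ Stmt8Aux.Iter Pb Pt E (j + h) :=
          Stmt8Aux.iter_mono Pb Pt E (by omega)
      _ = Stmt8Aux.Iter Pb Pt E j := Stmt8Aux.iter_stab Pb Pt E hj h
      _ ⊆ Stmt8Aux.Iter Pb Pt E k := Stmt8Aux.iter_mono Pb Pt E hjk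
  obtain ⟨h, hmem⟩ := Stmt8Aux.iter_complete Pb Pt E hd m n hw
  obtain ⟨w', hd', hw', hl⟩ := Stmt8Aux.iter_sound Pb Pt E (hsub h hmem)
  have hk1 : 1 ≤ k := by
    have : Nonempty (N × V × V) := ⟨(a, m, m)⟩
    exact Fintype.card_pos_iff.mpr this
  have hkcard : k = Fintype.card N * Fintype.card V ^ 2 := by
    simp [hk, Fintype.card_prod, sq, mul_assoc]
  have hpow : 2 ^ k = 2 * 2 ^ (k - 1) := by
    rw [← pow_succ']
    congr 1
    omega
  refine ⟨w', hd', hw', ?_⟩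
  rw [← hkcard]
  omega
end

section
/- Let u, v ≥ 1 and let H be the double-cyclic graph consisting of a cycle of u edges labeled s₁ and a cycle of v edges labeled s₂, sharing exactly one common node c. Then L(H; c, c) ∩ { s₁^k s₂^k : k ≥ 1 } = { s₁^(j·lcm(u,v)) s₂^(j·lcm(u,v)) : j ≥ 1 }. -/
/-- Edge relation of the double-cyclic graph on nodes `ℕ` with shared node
`c = 0`: a cycle of `u` edges labeled `s₁ = true` through nodes
`0, 1, …, u-1` (`m_i = i`), and a cycle of `v` edges labeled `s₂ = false`
through nodes `0, u, u+1, …, u+v-2` (`n_i = u - 1 + i`). -/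
def DCE (u v : ℕ) : ℕ → Bool → ℕ → Prop := fun x s y =>
  (s = true ∧ x < u ∧ y = (x + 1) % u) ∨
  (s = false ∧ ∃ j < v, x = (if j = 0 then 0 else u - 1 + j) ∧
      y = (if (j + 1) % v = 0 then 0 else u - 1 + (j + 1) % v))

/-- Position of index `j` on the `s₂`-cycle. -/
def fcyc (u : ℕ) (j : ℕ) : ℕ := if j = 0 then 0 else u - 1 + j

lemma gwalk_append {V σ : Type*} {E : V → σ → V → Prop} {a b c : V}
    {w1 w2 : List σ} (h1 : GWalk E a w1 b) (h2 : GWalk E b w2 c) :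
    GWalk E a (w1 ++ w2) c := by
  induction h1 with
  | nil => simpa
  | cons e _ ih => exact GWalk.cons e (ih h2)

lemma truewalk (u v : ℕ) (hu : 1 ≤ u) : ∀ (k x : ℕ),
    GWalk (DCE u v) (x % u) (List.replicate k true) ((x + k) % u) := by
  intro k
  induction k with
  | zero => intro x; simpa using GWalk.nil
  | succ k ih =>
    intro x
    have e : DCE u v (x % u) true ((x + 1) % u) := by
      left
      exact ⟨rfl, Nat.mod_lt _ hu, (Nat.mod_add_mod x u 1).symm⟩
    have h2 := ih (x + 1)
    rw [List.replicate_succ, show x + (k + 1) = (x + 1) + k by ring]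
    exact GWalk.cons e h2

lemma falsewalk (u v : ℕ) (hv : 1 ≤ v) : ∀ (k j : ℕ), j < v →
    GWalk (DCE u v) (fcyc u j) (List.replicate k false) (fcyc u ((j + k) % v)) := by
  intro k
  induction k with
  | zero =>
    intro j hj
    rw [Nat.add_zero, Nat.mod_eq_of_lt hj]
    exact GWalk.nil
  | succ k ih =>
    intro j hj
    have e : DCE u v (fcyc u j) false (fcyc u ((j + 1) % v)) := by
      right
      refine ⟨rfl, j, hj, ?_, ?_⟩ <;> simp [fcyc]
    have h2 := ih ((j + 1) % v) (Nat.mod_lt _ hv)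
    rw [Nat.mod_add_mod] at h2
    rw [List.replicate_succ, show j + (k + 1) = j + 1 + k by ring]
    exact GWalk.cons e h2

lemma truewalk_inv (u v : ℕ) (hu : 1 ≤ u) : ∀ (k x : ℕ) {w : List Bool} {n : ℕ},
    x < u → GWalk (DCE u v) x (List.replicate k true ++ w) n →
    GWalk (DCE u v) ((x + k) % u) w n := by
  intro k
  induction k with
  | zero =>
    intro x w n hx h
    rwa [Nat.add_zero, Nat.mod_eq_of_lt hx]
  | succ k ih =>
    intro x w n hx h
    rw [List.replicate_succ, List.cons_append] at h
    cases h with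
    | cons e h' =>
      unfold DCE at e
      rcases e with ⟨-, -, ho⟩ | ⟨hh, -⟩
      · subst ho
        have := ih ((x + 1) % u) (Nat.mod_lt _ hu) h'
        rwa [Nat.mod_add_mod, show x + 1 + k = x + (k + 1) by ring] at this
      · simp at hh

lemma fcyc_inj (u : ℕ) (hu : 1 ≤ u) {j j' : ℕ} (h : fcyc u j = fcyc u j') :
    j = j' := by
  unfold fcyc at h; split_ifs at h <;> omega

lemma falsewalk_inv (u v : ℕ) (hu : 1 ≤ u) (hv : 1 ≤ v) : ∀ (k j : ℕ) {n : ℕ},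
    j < v → GWalk (DCE u v) (fcyc u j) (List.replicate k false) n →
    n = fcyc u ((j + k) % v) := by
  intro k
  induction k with
  | zero =>
    intro j n hj h
    cases h
    rw [Nat.add_zero, Nat.mod_eq_of_lt hj]
  | succ k ih =>
    intro j n hj h
    rw [List.replicate_succ] at h
    cases h with
    | cons e h' =>
      unfold DCE at e
      rcases e with ⟨hh, -⟩ | ⟨-, j', hj', hx, hy⟩
      · simp at hh
      · have hjj : j' = j := (fcyc_inj u hu (show fcyc u j' = fcyc u j by
          unfold fcyc; exact hx.symm))
        subst hjj
        have ho : _ = fcyc u ((j' + 1) % v) := hy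
        subst ho
        have := ih ((j' + 1) % v) (Nat.mod_lt _ hv) h'
        rwa [Nat.mod_add_mod, show j' + 1 + k = j' + (k + 1) by ring] at this

/-- For the double-cyclic graph `H` with an `s₁`-cycle of `u ≥ 1` edges and an
`s₂`-cycle of `v ≥ 1` edges sharing node `c = 0`,
`L(H; c, c) ∩ { s₁^k s₂^k : k ≥ 1 } = { s₁^(j·lcm(u,v)) s₂^(j·lcm(u,v)) : j ≥ 1 }`. -/
theorem stmt12 (u v : ℕ) (hu : 1 ≤ u) (hv : 1 ≤ v) (w : List Bool) :
    (GWalk (DCE u v) 0 w 0 ∧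
        ∃ k : ℕ, 1 ≤ k ∧ w = List.replicate k true ++ List.replicate k false) ↔
      ∃ j : ℕ, 1 ≤ j ∧
        w = List.replicate (j * Nat.lcm u v) true ++
              List.replicate (j * Nat.lcm u v) false := by
  have hlcm : 1 ≤ Nat.lcm u v := Nat.pos_of_ne_zero (Nat.lcm_ne_zero (by omega) (by omega))
  constructor
  · rintro ⟨hwalk, k, hk, rfl⟩
    -- first the true part
    have h1 := truewalk_inv u v hu k 0 (by omega) hwalk
    rw [Nat.zero_add] at h1
    -- the start of the false part must be a false-cycle node < u, hence 0
    have hku : k % u = 0 := by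
      obtain ⟨k', rfl⟩ : ∃ k', k = k' + 1 := ⟨k - 1, by omega⟩
      rw [List.replicate_succ] at h1
      cases h1 with
      | cons e h' =>
        unfold DCE at e
        rcases e with ⟨hh, -⟩ | ⟨-, j', hj', hx, -⟩
        · simp at hh
        · have hlt : (k' + 1) % u < u := Nat.mod_lt _ (by omega)
          split_ifs at hx <;> omega
    rw [hku] at h1
    have h2 := falsewalk_inv u v hu hv k 0 (by omega) (by
      simpa [fcyc] using h1)
    have hkv : k % v = 0 := by
      rw [Nat.zero_add] at h2
      unfold fcyc at h2
      have hlt : k % v < v := Nat.mod_lt _ (by omega)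
      split_ifs at h2 <;> omega
    have hdvd : Nat.lcm u v ∣ k :=
      Nat.lcm_dvd ((Nat.dvd_iff_mod_eq_zero).mpr hku)
        ((Nat.dvd_iff_mod_eq_zero).mpr hkv)
    obtain ⟨j, rfl⟩ := hdvd
    refine ⟨j, ?_, by rw [mul_comm]⟩
    exact Nat.pos_of_ne_zero (by rintro rfl; simp at hk)
  · rintro ⟨j, hj, rfl⟩
    set k := j * Nat.lcm u v with hkdef
    have hk : 1 ≤ k := by
      have := Nat.mul_le_mul hj hlcm
      simpa using this
    have hdu : u ∣ k := Dvd.dvd.mul_left (Nat.dvd_lcm_left u v) j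
    have hdv : v ∣ k := Dvd.dvd.mul_left (Nat.dvd_lcm_right u v) j
    have hku : k % u = 0 := (Nat.dvd_iff_mod_eq_zero).mp hdu
    have hkv : k % v = 0 := (Nat.dvd_iff_mod_eq_zero).mp hdv
    refine ⟨?_, k, hk, rfl⟩
    have t := truewalk u v hu k 0
    rw [Nat.zero_mod, Nat.zero_add, hku] at t
    have f := falsewalk u v hv k 0 (by omega)
    rw [Nat.zero_add, hkv] at f
    simp only [fcyc, if_pos rfl] at f
    exact gwalk_append t f
end

section
/- In the annotated grammar over a grammar G and graph H, if an annotated nonterminal (a, m, n) derives a path π, then π is a path in H from m to n and the trace of π lies in L(G; a) ∩ L(H; m, n). -/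
lemma IsPath.append {V σ : Type*} {E : V → σ → V → Prop} {m o n : V}
    {p₁ p₂ : List (V × σ × V)} (h₁ : IsPath E m p₁ o) (h₂ : IsPath E o p₂ n) :
    IsPath E m (p₁ ++ p₂) n := by
  induction h₁ with
  | nil => exact h₂
  | cons he _ ih => exact IsPath.cons he (ih h₂)

lemma GWalk.append {V σ : Type*} {E : V → σ → V → Prop} {m o n : V}
    {w₁ w₂ : List σ} (h₁ : GWalk E m w₁ o) (h₂ : GWalk E o w₂ n) :
    GWalk E m (w₁ ++ w₂) n := by
  induction h₁ with
  | nil => exact h₂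
  | cons he _ ih => exact GWalk.cons he (ih h₂)

/-- If an annotated nonterminal `(a, m, n)` derives a path `p` in the annotated
grammar over `(G, H)`, then `p` is a path in `H` from `m` to `n` and the trace
of `p` lies in `L(G; a) ∩ L(H; m, n)`. -/
theorem stmt15 {N σ V : Type*} (Pb : N → N → N → Prop) (Pt : N → σ → Prop)
    (E : V → σ → V → Prop) (a : N) (m n : V) (p : List (V × σ × V))
    (h : AnnDerives Pb Pt E a m n p) :
    IsPath E m p n ∧ CNFDerives Pb Pt a (p.map fun e => e.2.1) ∧
      GWalk E m (p.map fun e => e.2.1) n := by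
  induction h with
  | term ht he =>
    exact ⟨IsPath.cons he IsPath.nil, CNFDerives.term ht, GWalk.cons he GWalk.nil⟩
  | bin hb _ _ ih₁ ih₂ =>
    obtain ⟨ip₁, cd₁, gw₁⟩ := ih₁
    obtain ⟨ip₂, cd₂, gw₂⟩ := ih₂
    refine ⟨ip₁.append ip₂, ?_, ?_⟩ <;> rw [List.map_append]
    · exact CNFDerives.bin hb cd₁ cd₂
    · exact gw₁.append gw₂
end

section
/- Let P' be a deterministic non-recursive set of production rules (in Chomsky Normal Form) and let a be a head nonterminal of P'. Then the unique terminal string derived from a via P' is well-defined: any two complete derivations from a using only rules of P' produce the same terminal string. -/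
/-- For a deterministic non-recursive set of CNF production rules and a head
nonterminal `a`, the terminal string derived from `a` is well-defined: any two
complete derivations from `a` produce the same string. -/
theorem stmt16 {N σ : Type*} (Pb : N → N → N → Prop) (Pt : N → σ → Prop)
    (hdet : DetNonRec Pb Pt) (a : N) (ha : IsHead Pb Pt a) (w₁ w₂ : List σ)
    (h₁ : CNFDerives Pb Pt a w₁) (h₂ : CNFDerives Pb Pt a w₂) : w₁ = w₂ := by
    induction h₁ generalizing w₂ with
  | @term a s hs =>
    cases h₂ with
    | term hs' => rw [(hdet.2.1 a (Or.inr ⟨_, hs⟩)).2.1 s _ hs hs']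
    | bin hb _ _ => exact absurd ⟨⟨_, _, hb⟩, ⟨_, hs⟩⟩ ((hdet.2.1 a (Or.inr ⟨_, hs⟩)).2.2)
  | @bin a b c u₁ u₂ hb hu₁ hu₂ ih₁ ih₂ =>
    cases h₂ with
    | term hs => exact absurd ⟨⟨_, _, hb⟩, ⟨_, hs⟩⟩ ((hdet.2.1 a (Or.inl ⟨_, _, hb⟩)).2.2)
    | @bin _ b' c' v₁ v₂ hb' hv₁ hv₂ =>
      obtain ⟨rfl, rfl⟩ := (hdet.2.1 a (Or.inl ⟨_, _, hb⟩)).1 _ _ _ _ hb hb'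
      have hbH : IsHead Pb Pt b := by cases hu₁ with
        | term h => exact Or.inr ⟨_, h⟩
        | bin h _ _ => exact Or.inl ⟨_, _, h⟩
      have hcH : IsHead Pb Pt c := by cases hu₂ with
        | term h => exact Or.inr ⟨_, h⟩
        | bin h _ _ => exact Or.inl ⟨_, _, h⟩
      rw [ih₁ hbH _ hv₁, ih₂ hcH _ hv₂]
end
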